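/- arXiv:2312.05851 — 2 statements merged into one kernel-verified Lean document; each statement's English description precedes it below -/
import Mathlib

section
/- Sklar's theorem (bivariate, continuous case): for a pair (Y₁, Y₂) of real random variables with continuous marginal CDFs F₁, F₂ and joint CDF F, there exists a unique copula C : [0,1]² → [0,1] such that F(y₁, y₂) = C(F₁(y₁), F₂(y₂)) for all y₁, y₂. -/
/-!
With continuous marginals, `U = F₁ (Y₁)` and `V = F₂ (Y₂)` are uniform on `[0,1]` (probability
integral transform), so their joint distribution function `C` is a copula. Moreover
`{F₁ (Y₁) ≤ F₁ y}` and `{Y₁ ≤ y}` differ by a null set, hence `F y₁ y₂ = C (F₁ y₁) (F₂ y₂)`.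
Uniqueness: a copula is fixed on the boundary of the square, and continuous marginals attain
every value in `(0,1)`.
-/

open MeasureTheory Set

/-- A bivariate copula: grounded, with uniform margins, and 2-increasing on `[0,1]²`. -/
def IsCopula (C : ℝ → ℝ → ℝ) : Prop :=
  (∀ u ∈ Icc (0:ℝ) 1, C u 0 = 0 ∧ C 0 u = 0 ∧ C u 1 = u ∧ C 1 u = u) ∧
  (∀ u₁ u₂ v₁ v₂, u₁ ∈ Icc (0:ℝ) 1 → u₂ ∈ Icc (0:ℝ) 1 → v₁ ∈ Icc (0:ℝ) 1 →
    v₂ ∈ Icc (0:ℝ) 1 → u₁ ≤ u₂ → v₁ ≤ v₂ →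
    0 ≤ C u₂ v₂ - C u₂ v₁ - C u₁ v₂ + C u₁ v₁)

open Filter ProbabilityTheory

theorem IsCopula.eq_of_eq_on_Ioo {C C' : ℝ → ℝ → ℝ} (hC : IsCopula C) (hC' : IsCopula C')
    (h : ∀ u ∈ Ioo (0:ℝ) 1, ∀ v ∈ Ioo (0:ℝ) 1, C u v = C' u v) :
    ∀ u ∈ Icc (0:ℝ) 1, ∀ v ∈ Icc (0:ℝ) 1, C u v = C' u v := by
  intro u hu v hv
  obtain ⟨hb, -⟩ := hC
  obtain ⟨hb', -⟩ := hC'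
  rcases eq_endpoints_or_mem_Ioo_of_mem_Icc hu with rfl | rfl | hu'
  · rw [(hb v hv).2.1, (hb' v hv).2.1]
  · rw [(hb v hv).2.2.2, (hb' v hv).2.2.2]
  rcases eq_endpoints_or_mem_Ioo_of_mem_Icc hv with rfl | rfl | hv'
  · rw [(hb u hu).1, (hb' u hu).1]
  · rw [(hb u hu).2.2.1, (hb' u hu).2.2.1]
  exact h u hu' v hv'

theorem measureReal_inter_add_measureReal_inter_le {Ω : Type*} [MeasurableSpace Ω]
    {μ : Measure Ω} [IsFiniteMeasure μ] {S S' T T' : Set Ω} (hS' : MeasurableSet S')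
    (hT : MeasurableSet T) (hSS' : S ⊆ S') (hTT' : T ⊆ T') :
    μ.real (S ∩ T') + μ.real (S' ∩ T) ≤ μ.real (S' ∩ T') + μ.real (S ∩ T) := by
  have hinter : S ∩ T' ∩ (S' ∩ T) = S ∩ T := by
    ext; constructor
    · rintro ⟨⟨hS, -⟩, -, hT⟩; exact ⟨hS, hT⟩
    · rintro ⟨hS, hT⟩; exact ⟨⟨hS, hTT' hT⟩, hSS' hS, hT⟩
  have hunion : S ∩ T' ∪ S' ∩ T ⊆ S' ∩ T' := by
    rintro _ (⟨hS, hT⟩ | ⟨hS, hT⟩)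
    exacts [⟨hSS' hS, hT⟩, ⟨hS, hTT' hT⟩]
  rw [← measureReal_union_add_inter (s := S ∩ T') (hS'.inter hT), hinter]
  exact add_le_add_left (measureReal_mono hunion) _

theorem isCopula_jointCdf_of_uniform {Ω : Type*} [MeasurableSpace Ω] (P : Measure Ω)
    [IsProbabilityMeasure P] {U V : Ω → ℝ} (hU : Measurable U) (hV : Measurable V)
    (hUu : ∀ u ∈ Icc (0:ℝ) 1, P.real {ω | U ω ≤ u} = u)
    (hVv : ∀ v ∈ Icc (0:ℝ) 1, P.real {ω | V ω ≤ v} = v) :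
    IsCopula fun u v => P.real {ω | U ω ≤ u ∧ V ω ≤ v} := by
  have hUm (u : ℝ) : MeasurableSet {ω | U ω ≤ u} := hU measurableSet_Iic
  have hVm (v : ℝ) : MeasurableSet {ω | V ω ≤ v} := hV measurableSet_Iic
  have hzero {S T : Set Ω} (hT : P.real T = 0) : P.real (S ∩ T) = 0 :=
    le_antisymm (hT ▸ measureReal_mono inter_subset_right) measureReal_nonneg
  -- Fréchet bound `P S + P T - 1 ≤ P (S ∩ T)`: the rectangle inequality with `S' = T' = univ`.
  have hone {S T : Set Ω} (hT : MeasurableSet T) (hT1 : P.real T = 1) :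
      P.real (S ∩ T) = P.real S := by
    refine le_antisymm (measureReal_mono inter_subset_left) ?_
    have := measureReal_inter_add_measureReal_inter_le (μ := P) MeasurableSet.univ hT
      (subset_univ S) (subset_univ T)
    simp only [inter_univ, univ_inter, probReal_univ] at this
    linarith
  have h0 : (0:ℝ) ∈ Icc (0:ℝ) 1 := left_mem_Icc.2 zero_le_one
  have h1 : (1:ℝ) ∈ Icc (0:ℝ) 1 := right_mem_Icc.2 zero_le_one
  simp only [IsCopula, ofPred_and]
  refine ⟨fun u hu => ⟨hzero (hVv 0 h0), ?_, (hone (hVm 1) (hVv 1 h1)).trans (hUu u hu), ?_⟩, ?_⟩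
  · rw [inter_comm]; exact hzero (hUu 0 h0)
  · rw [inter_comm, hone (hUm 1) (hUu 1 h1)]; exact hVv u hu
  · intro u₁ u₂ v₁ v₂ _ _ _ _ hu hv
    have := measureReal_inter_add_measureReal_inter_le (μ := P) (S := {ω | U ω ≤ u₁})
      (T' := {ω | V ω ≤ v₂}) (hUm u₂) (hVm v₁) (fun ω h => le_trans h hu)
      (fun ω h => le_trans h hv)
    linarith

theorem Ioo_subset_range_cdf (μ : Measure ℝ) (hc : Continuous (cdf μ)) :
    Ioo (0:ℝ) 1 ⊆ range (cdf μ) :=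
  fun _ hu => mem_range_of_exists_le_of_exists_ge hc
    ((tendsto_cdf_atBot μ).eventually_le_const hu.1).exists
    ((tendsto_cdf_atTop μ).eventually_const_le hu.2).exists

section ContinuousCdf

variable (μ : Measure ℝ) [IsProbabilityMeasure μ]

-- `{x | cdf μ x ≤ u}` is a closed lower set, hence `Iic s` for its supremum `s`, and `cdf μ s = u`
-- because the continuous `cdf μ` attains `u`.
theorem measureReal_cdf_le (hc : Continuous (cdf μ)) {u : ℝ} (hu : u ∈ Icc (0:ℝ) 1) :
    μ.real {x | cdf μ x ≤ u} = u := by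
  rcases eq_or_lt_of_le hu.2 with rfl | hu1
  · simp [cdf_le_one]
  set S := {x | cdf μ x ≤ u}
  have hbdd : BddAbove S := by
    obtain ⟨b, hb⟩ := eventually_atTop.1 ((tendsto_cdf_atTop μ).eventually_const_lt hu1)
    exact ⟨b, fun x hx => not_lt.1 fun hbx => (hb x hbx.le).not_ge hx⟩
  rcases S.eq_empty_or_nonempty with hS | hS
  · rw [hS, measureReal_empty]
    refine le_antisymm hu.1 (not_lt.1 fun hu0 => ?_)
    obtain ⟨y, hy⟩ := Ioo_subset_range_cdf μ hc ⟨hu0, hu1⟩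
    exact hS.subset (show cdf μ y ≤ u from hy.le)
  have hs : sSup S ∈ S :=
    (isLUB_csSup hS hbdd).mem_of_isClosed hS (isClosed_le hc continuous_const)
  have hSs : S = Iic (sSup S) :=
    Subset.antisymm (fun x hx => le_csSup hbdd hx) fun x hx => (monotone_cdf μ hx).trans hs
  rw [hSs, ← cdf_eq_real]
  refine le_antisymm hs ?_
  rcases eq_or_lt_of_le hu.1 with rfl | hu0
  · exact cdf_nonneg μ _
  obtain ⟨y, rfl⟩ := Ioo_subset_range_cdf μ hc ⟨hu0, hu1⟩
  exact monotone_cdf μ (le_csSup hbdd (le_refl (cdf μ y)))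

theorem cdf_le_cdf_ae_eq_Iic (hc : Continuous (cdf μ)) (y : ℝ) :
    {x | cdf μ x ≤ cdf μ y} =ᵐ[μ] Iic y := by
  have h : μ.real {x | cdf μ x ≤ cdf μ y} = μ.real (Iic y) := by
    rw [measureReal_cdf_le μ hc ⟨cdf_nonneg μ y, cdf_le_one μ y⟩, cdf_eq_real]
  have hle := ((measureReal_eq_measureReal_iff (measure_ne_top μ _) (measure_ne_top μ _)).1 h).le
  exact (ae_eq_of_subset_of_measure_ge (fun x hx => monotone_cdf μ hx) hle
    measurableSet_Iic.nullMeasurableSet (measure_ne_top μ _)).symm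

end ContinuousCdf

section RandomVariable

variable {Ω : Type*} [MeasurableSpace Ω] (P : Measure Ω) [IsProbabilityMeasure P]
  {Y : Ω → ℝ}

theorem cdf_map_apply (hY : Measurable Y) (y : ℝ) :
    cdf (P.map Y) y = P.real {ω | Y ω ≤ y} := by
  have := Measure.isProbabilityMeasure_map (μ := P) hY.aemeasurable
  rw [cdf_eq_real, map_measureReal_apply hY measurableSet_Iic]
  rfl

theorem measureReal_cdf_map_comp_le (hY : Measurable Y) (hc : Continuous (cdf (P.map Y)))
    {u : ℝ} (hu : u ∈ Icc (0:ℝ) 1) : P.real {ω | cdf (P.map Y) (Y ω) ≤ u} = u := by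
  have := Measure.isProbabilityMeasure_map (μ := P) hY.aemeasurable
  exact (map_measureReal_apply hY (measurableSet_le hc.measurable measurable_const)).symm.trans
    (measureReal_cdf_le _ hc hu)

theorem cdf_map_comp_le_ae_eq (hY : Measurable Y) (hc : Continuous (cdf (P.map Y))) (y : ℝ) :
    {ω | cdf (P.map Y) (Y ω) ≤ cdf (P.map Y) y} =ᵐ[P] {ω | Y ω ≤ y} := by
  have := Measure.isProbabilityMeasure_map (μ := P) hY.aemeasurable
  exact ae_eq_comp hY.aemeasurable (cdf_le_cdf_ae_eq_Iic _ hc y)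

end RandomVariable

theorem sklar_bivariate_continuous
    {Ω : Type*} [MeasurableSpace Ω] (P : Measure Ω) [IsProbabilityMeasure P]
    (Y₁ Y₂ : Ω → ℝ) (hY₁ : Measurable Y₁) (hY₂ : Measurable Y₂)
    (F₁ F₂ : ℝ → ℝ) (F : ℝ → ℝ → ℝ)
    (hF₁ : ∀ y, F₁ y = (P {ω | Y₁ ω ≤ y}).toReal)
    (hF₂ : ∀ y, F₂ y = (P {ω | Y₂ ω ≤ y}).toReal)
    (hF : ∀ y₁ y₂, F y₁ y₂ = (P {ω | Y₁ ω ≤ y₁ ∧ Y₂ ω ≤ y₂}).toReal)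
    (hc₁ : Continuous F₁) (hc₂ : Continuous F₂) :
    ∃ C : ℝ → ℝ → ℝ, IsCopula C ∧ (∀ y₁ y₂, F y₁ y₂ = C (F₁ y₁) (F₂ y₂)) ∧
      ∀ C' : ℝ → ℝ → ℝ, IsCopula C' → (∀ y₁ y₂, F y₁ y₂ = C' (F₁ y₁) (F₂ y₂)) →
        ∀ u ∈ Icc (0:ℝ) 1, ∀ v ∈ Icc (0:ℝ) 1, C u v = C' u v := by
  obtain rfl : F₁ = cdf (P.map Y₁) := funext fun y => (hF₁ y).trans (cdf_map_apply P hY₁ y).symm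
  obtain rfl : F₂ = cdf (P.map Y₂) := funext fun y => (hF₂ y).trans (cdf_map_apply P hY₂ y).symm
  set C : ℝ → ℝ → ℝ := fun u v =>
    P.real {ω | cdf (P.map Y₁) (Y₁ ω) ≤ u ∧ cdf (P.map Y₂) (Y₂ ω) ≤ v}
  have hC : IsCopula C := isCopula_jointCdf_of_uniform P (hc₁.measurable.comp hY₁)
    (hc₂.measurable.comp hY₂) (fun _ => measureReal_cdf_map_comp_le P hY₁ hc₁)
    (fun _ => measureReal_cdf_map_comp_le P hY₂ hc₂)
  have hrep (y₁ y₂ : ℝ) : F y₁ y₂ = C (cdf (P.map Y₁) y₁) (cdf (P.map Y₂) y₂) :=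
    (hF y₁ y₂).trans (measureReal_congr ((cdf_map_comp_le_ae_eq P hY₁ hc₁ y₁).inter
      (cdf_map_comp_le_ae_eq P hY₂ hc₂ y₂))).symm
  refine ⟨C, hC, hrep, fun C' hC' hrep' => hC.eq_of_eq_on_Ioo hC' fun u hu v hv => ?_⟩
  obtain ⟨y₁, rfl⟩ := Ioo_subset_range_cdf _ hc₁ hu
  obtain ⟨y₂, rfl⟩ := Ioo_subset_range_cdf _ hc₂ hv
  exact (hrep y₁ y₂).symm.trans (hrep' y₁ y₂)
end

section
/- If a trivariate density factorizes as f(y₁,y₂,y₃) = c_{13|2}(F_{1|2}(y₁|y₂), F_{3|2}(y₃|y₂)) · c_{23}(F₂(y₂), F₃(y₃)) · c_{12}(F₁(y₁), F₂(y₂)) · f₁(y₁) f₂(y₂) f₃(y₃) with all factors nonnegative and the copula densities integrating to 1 on the unit square, then f integrates to 1 and its marginals are f₁, f₂, f₃. -/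
open MeasureTheory Set ENNReal

lemma vine_F_mem (g : ℝ → ℝ) (hg1 : ∫⁻ x, ENNReal.ofReal (g x) = 1)
    (F : ℝ → ℝ) (hF : ∀ x, F x = (∫⁻ t in Iic x, ENNReal.ofReal (g t)).toReal) (x : ℝ) :
    F x ∈ Icc (0:ℝ) 1 := by
  refine ⟨by rw [hF]; exact ENNReal.toReal_nonneg, ?_⟩
  rw [hF]
  have h : ∫⁻ t in Iic x, ENNReal.ofReal (g t) ≤ 1 := by
    rw [← hg1]; exact setLIntegral_le_lintegral _ _
  exact ENNReal.toReal_le_of_le_ofReal zero_le_one (by simpa using h)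

lemma vine_key (g : ℝ → ℝ) (hgm : Measurable g) (hg0 : ∀ x, 0 ≤ g x)
    (hg1 : ∫⁻ x, ENNReal.ofReal (g x) = 1)
    (F : ℝ → ℝ) (hF : ∀ x, F x = (∫⁻ t in Iic x, ENNReal.ofReal (g t)).toReal)
    (c : ℝ → ℝ≥0∞) (hc : Measurable c) :
    ∫⁻ t, c (F t) * ENNReal.ofReal (g t) = ∫⁻ u in Ioo (0:ℝ) 1, c u := by
  set μ : Measure ℝ := volume.withDensity (fun t => ENNReal.ofReal (g t)) with hμ
  have hμs : ∀ s, MeasurableSet s → μ s = ∫⁻ t in s, ENNReal.ofReal (g t) :=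
    fun s hs => withDensity_apply _ hs
  have hμuniv : μ univ = 1 := by
    rw [hμs _ MeasurableSet.univ, Measure.restrict_univ, hg1]
  have hle : ∀ s, μ s ≤ 1 := fun s => by rw [← hμuniv]; exact measure_mono (subset_univ _)
  have hne : ∀ s, μ s ≠ ⊤ := fun s => ne_top_of_le_ne_top one_ne_top (hle s)
  have hFμ : ∀ x, F x = (μ (Iic x)).toReal := by
    intro x; rw [hF x, hμs _ measurableSet_Iic]
  have hFx : ∀ x, ENNReal.ofReal (F x) = μ (Iic x) := by
    intro x; rw [hFμ x, ENNReal.ofReal_toReal (hne _)]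
  have hFmono : Monotone F := by
    intro a b hab
    rw [hFμ a, hFμ b]
    exact ENNReal.toReal_mono (hne _) (measure_mono (Iic_subset_Iic.2 hab))
  have hF0 : ∀ x, 0 ≤ F x := fun x => by rw [hFμ]; exact ENNReal.toReal_nonneg
  have hF1 : ∀ x, F x ≤ 1 := fun x => by
    rw [hFμ]
    calc (μ (Iic x)).toReal ≤ (μ univ).toReal :=
          ENNReal.toReal_mono (hne _) (measure_mono (subset_univ _))
      _ = 1 := by rw [hμuniv]; simp
  -- integrability of g
  have hInt : Integrable g := by
    refine ⟨hgm.aestronglyMeasurable, ?_⟩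
    rw [hasFiniteIntegral_iff_ofReal (ae_of_all _ hg0), hg1]
    exact one_lt_top
  have hFreal : ∀ x, F x = ∫ t in Iic x, g t := by
    intro x
    rw [integral_eq_lintegral_of_nonneg_ae (ae_of_all _ fun t => hg0 t)
      hgm.aestronglyMeasurable, hF x]
  have hFcont : Continuous F := by
    have : F = fun x => (∫ t in (0:ℝ)..x, g t) + F 0 := by
      funext x
      rw [hFreal x, hFreal 0, ← intervalIntegral.integral_Iic_sub_Iic
        (hInt.integrableOn) (hInt.integrableOn)]
      ring
    rw [this]
    exact (intervalIntegral.continuous_primitive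
      (fun a b => hInt.intervalIntegrable) 0).add continuous_const
  have hFmeas : Measurable F := hFmono.measurable
  -- tendsto
  have hFtop : Filter.Tendsto F Filter.atTop (nhds 1) := by
    have h1 := tendsto_measure_Iic_atTop μ
    rw [hμuniv] at h1
    have h2 := (ENNReal.tendsto_toReal one_ne_top).comp h1
    simp only [ENNReal.toReal_one] at h2
    exact h2.congr fun x => (hFμ x).symm
  have hFbot : Filter.Tendsto F Filter.atBot (nhds 0) := by
    have hiI : ⋂ x : ℝ, Iic x = (∅ : Set ℝ) := by
      ext y
      simp only [mem_iInter, mem_Iic, mem_empty_iff_false, iff_false, not_forall, not_le]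
      exact ⟨y - 1, by linarith⟩
    have h1 := tendsto_measure_iInter_atBot (μ := μ)
      (fun x => measurableSet_Iic.nullMeasurableSet) (fun a b hab => Iic_subset_Iic.2 hab)
      ⟨0, hne _⟩
    rw [hiI, measure_empty] at h1
    have h2 := (ENNReal.tendsto_toReal (by simp : (0:ℝ≥0∞) ≠ ⊤)).comp h1
    simp only [ENNReal.toReal_zero] at h2
    exact h2.congr fun x => (hFμ x).symm
  -- map measure
  have hmap : μ.map F = volume.restrict (Icc 0 1) := by
    have hfin : IsFiniteMeasure μ := ⟨by rw [hμuniv]; exact one_lt_top⟩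
    have hfinmap : IsFiniteMeasure (μ.map F) := by
      constructor
      rw [Measure.map_apply hFmeas MeasurableSet.univ]
      exact lt_of_le_of_lt (hle _) one_lt_top
    refine Measure.ext_of_Iic _ _ (fun u => ?_)
    rw [Measure.map_apply hFmeas measurableSet_Iic,
      Measure.restrict_apply' measurableSet_Icc]
    rcases lt_or_ge u 0 with hu | hu
    · have h1 : F ⁻¹' Iic u = ∅ := by
        ext x; simp only [mem_preimage, mem_Iic, mem_empty_iff_false, iff_false, not_le]
        exact lt_of_lt_of_le hu (hF0 x)
      have h2 : Iic u ∩ Icc (0:ℝ) 1 = ∅ := by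
        ext x; simp only [mem_inter_iff, mem_Iic, mem_Icc, mem_empty_iff_false, iff_false]
        rintro ⟨h, h0, -⟩; exact absurd (le_trans h0 h) (not_le.2 hu)
      rw [h1, h2]; simp
    rcases le_or_gt 1 u with hu1 | hu1
    · have h1 : F ⁻¹' Iic u = univ := by
        ext x; simp only [mem_preimage, mem_Iic, mem_univ, iff_true]
        exact le_trans (hF1 x) hu1
      have h2 : Iic u ∩ Icc (0:ℝ) 1 = Icc 0 1 := by
        rw [inter_eq_right]
        exact fun x hx => le_trans hx.2 hu1
      rw [h1, h2, hμuniv, Real.volume_Icc]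
      simp
    · -- 0 ≤ u < 1
      have h2 : Iic u ∩ Icc (0:ℝ) 1 = Icc 0 u := by
        ext x
        simp only [mem_inter_iff, mem_Iic, mem_Icc]
        constructor
        · rintro ⟨h, h0, -⟩; exact ⟨h0, h⟩
        · rintro ⟨h0, h⟩; exact ⟨h, h0, le_trans h hu1.le⟩
      rw [h2, Real.volume_Icc]
      have hsub : u - 0 = u := by ring
      rw [hsub]
      set S := F ⁻¹' Iic u with hS
      have hSmem : ∀ x, x ∈ S ↔ F x ≤ u := fun x => Iff.rfl
      obtain ⟨b, hb⟩ := Filter.eventually_atTop.mp (hFtop.eventually (eventually_gt_nhds hu1))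
      by_cases hSne : S.Nonempty
      · have hSbdd : BddAbove S := by
          refine ⟨b, fun x hx => ?_⟩
          by_contra hxb
          push_neg at hxb
          exact absurd ((hSmem x).1 hx) (not_le.2 (hb x hxb.le))
        have hSclosed : IsClosed S := isClosed_Iic.preimage hFcont
        set a := sSup S with ha
        have haS : a ∈ S := hSclosed.csSup_mem hSne hSbdd
        have hSIic : S = Iic a := by
          ext x
          constructor
          · exact fun hx => le_csSup hSbdd hx
          · intro hx
            exact (hSmem x).2 (le_trans (hFmono hx) ((hSmem a).1 haS))
        have hFa : F a = u := by
          rcases eq_or_lt_of_le ((hSmem a).1 haS) with h | h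
          · exact h
          · exfalso
            set b' := max b (a + 1) with hb'
            have hab : a ≤ b' := le_max_of_le_right (by linarith)
            have hub' : u < F b' := hb b' (le_max_left _ _)
            obtain ⟨x, hx, hxeq⟩ := intermediate_value_Icc hab hFcont.continuousOn
              ⟨h.le, hub'.le⟩
            have hxa : x ≤ a := le_csSup hSbdd ((hSmem x).2 hxeq.le)
            have : x = a := le_antisymm hxa hx.1
            rw [this] at hxeq
            exact absurd hxeq (ne_of_lt h)
        rw [hSIic, ← hFx a, hFa]
      · have hu0 : u = 0 := by
          by_contra h
          have hupos : 0 < u := lt_of_le_of_ne hu (Ne.symm h)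
          obtain ⟨x, hx⟩ := (hFbot.eventually (eventually_lt_nhds hupos)).exists
          exact hSne ⟨x, le_of_lt hx⟩
        rw [not_nonempty_iff_eq_empty] at hSne
        rw [hSne, hu0]; simp
  calc ∫⁻ t, c (F t) * ENNReal.ofReal (g t)
      = ∫⁻ t, c (F t) ∂μ := by
        rw [hμ, lintegral_withDensity_eq_lintegral_mul _ hgm.ennreal_ofReal
          (show Measurable fun t => c (F t) from hc.comp hFmeas)]
        exact lintegral_congr fun t => (mul_comm _ _)
    _ = ∫⁻ u, c u ∂(μ.map F) := (lintegral_map hc hFmeas).symm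
    _ = ∫⁻ u in Icc (0:ℝ) 1, c u := by rw [hmap]
    _ = ∫⁻ u in Ioo (0:ℝ) 1, c u := by
        rw [Measure.restrict_congr_set Ioo_ae_eq_Icc]

lemma vine_key' (g : ℝ → ℝ) (hgm : Measurable g) (hg0 : ∀ x, 0 ≤ g x)
    (hg1 : ∫⁻ x, ENNReal.ofReal (g x) = 1)
    (F : ℝ → ℝ) (hF : ∀ x, F x = (∫⁻ t in Iic x, ENNReal.ofReal (g t)).toReal)
    (c' : ℝ → ℝ) (hc'm : Measurable c') (hc'0 : ∀ u, 0 ≤ c' u) :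
    ∫⁻ t, ENNReal.ofReal (c' (F t) * g t) = ∫⁻ u in Ioo (0:ℝ) 1, ENNReal.ofReal (c' u) := by
  have h := vine_key g hgm hg0 hg1 F hF (fun u => ENNReal.ofReal (c' u))
    (ENNReal.measurable_ofReal.comp hc'm)
  rw [← h]
  refine lintegral_congr fun t => ?_
  show ENNReal.ofReal (c' (F t) * g t) = ENNReal.ofReal (c' (F t)) * ENNReal.ofReal (g t)
  exact ENNReal.ofReal_mul (hc'0 (F t))

lemma vine_F_meas (g : ℝ → ℝ) (hg1 : ∫⁻ x, ENNReal.ofReal (g x) = 1)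
    (F : ℝ → ℝ) (hF : ∀ x, F x = (∫⁻ t in Iic x, ENNReal.ofReal (g t)).toReal) :
    Measurable F := by
  have hmono : Monotone F := by
    intro a b hab
    rw [hF a, hF b]
    refine ENNReal.toReal_mono ?_ (lintegral_mono_set (Iic_subset_Iic.2 hab))
    have hb : ∫⁻ t in Iic b, ENNReal.ofReal (g t) ≤ 1 := by
      rw [← hg1]; exact setLIntegral_le_lintegral _ _
    exact ne_top_of_le_ne_top one_ne_top hb
  exact hmono.measurable
theorem vine_copula_factorization_density
    (f₁ f₂ f₃ : ℝ → ℝ)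
    (hf₁m : Measurable f₁) (hf₂m : Measurable f₂) (hf₃m : Measurable f₃)
    (hf₁0 : ∀ x, 0 ≤ f₁ x) (hf₂0 : ∀ x, 0 ≤ f₂ x) (hf₃0 : ∀ x, 0 ≤ f₃ x)
    (hf₁1 : ∫⁻ x, ENNReal.ofReal (f₁ x) = 1)
    (hf₂1 : ∫⁻ x, ENNReal.ofReal (f₂ x) = 1)
    (hf₃1 : ∫⁻ x, ENNReal.ofReal (f₃ x) = 1)
    (F₁ F₂ F₃ : ℝ → ℝ)
    (hF₁ : ∀ x, F₁ x = (∫⁻ t in Iic x, ENNReal.ofReal (f₁ t)).toReal)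
    (hF₂ : ∀ x, F₂ x = (∫⁻ t in Iic x, ENNReal.ofReal (f₂ t)).toReal)
    (hF₃ : ∀ x, F₃ x = (∫⁻ t in Iic x, ENNReal.ofReal (f₃ t)).toReal)
    (c₁₂ c₂₃ c₁₃₂ : ℝ → ℝ → ℝ)
    (hc₁₂m : Measurable (Function.uncurry c₁₂))
    (hc₂₃m : Measurable (Function.uncurry c₂₃))
    (hc₁₃₂m : Measurable (Function.uncurry c₁₃₂))
    (hc₁₂0 : ∀ u v, 0 ≤ c₁₂ u v) (hc₂₃0 : ∀ u v, 0 ≤ c₂₃ u v)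
    (hc₁₃₂0 : ∀ u v, 0 ≤ c₁₃₂ u v)
    (hc₁₂u : ∀ v ∈ Icc (0:ℝ) 1, ∫⁻ u in Ioo (0:ℝ) 1, ENNReal.ofReal (c₁₂ u v) = 1)
    (hc₁₂v : ∀ u ∈ Icc (0:ℝ) 1, ∫⁻ v in Ioo (0:ℝ) 1, ENNReal.ofReal (c₁₂ u v) = 1)
    (hc₂₃u : ∀ v ∈ Icc (0:ℝ) 1, ∫⁻ u in Ioo (0:ℝ) 1, ENNReal.ofReal (c₂₃ u v) = 1)
    (hc₂₃v : ∀ u ∈ Icc (0:ℝ) 1, ∫⁻ v in Ioo (0:ℝ) 1, ENNReal.ofReal (c₂₃ u v) = 1)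
    (hc₁₃₂u : ∀ v ∈ Icc (0:ℝ) 1, ∫⁻ u in Ioo (0:ℝ) 1, ENNReal.ofReal (c₁₃₂ u v) = 1)
    (hc₁₃₂v : ∀ u ∈ Icc (0:ℝ) 1, ∫⁻ v in Ioo (0:ℝ) 1, ENNReal.ofReal (c₁₃₂ u v) = 1)
    (F₁₂ F₃₂ : ℝ → ℝ → ℝ)
    (hF₁₂ : ∀ y₁ y₂, F₁₂ y₁ y₂
      = (∫⁻ t in Iic y₁, ENNReal.ofReal (c₁₂ (F₁ t) (F₂ y₂) * f₁ t)).toReal)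
    (hF₃₂ : ∀ y₃ y₂, F₃₂ y₃ y₂
      = (∫⁻ t in Iic y₃, ENNReal.ofReal (c₂₃ (F₂ y₂) (F₃ t) * f₃ t)).toReal)
    (f : ℝ → ℝ → ℝ → ℝ)
    (hf : ∀ y₁ y₂ y₃, f y₁ y₂ y₃
      = c₁₃₂ (F₁₂ y₁ y₂) (F₃₂ y₃ y₂) * c₂₃ (F₂ y₂) (F₃ y₃)
          * c₁₂ (F₁ y₁) (F₂ y₂) * f₁ y₁ * f₂ y₂ * f₃ y₃) :
    (∫⁻ y₁, ∫⁻ y₂, ∫⁻ y₃, ENNReal.ofReal (f y₁ y₂ y₃)) = 1 ∧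
    (∀ y₁, (∫⁻ y₂, ∫⁻ y₃, ENNReal.ofReal (f y₁ y₂ y₃)) = ENNReal.ofReal (f₁ y₁)) ∧
    (∀ y₂, (∫⁻ y₁, ∫⁻ y₃, ENNReal.ofReal (f y₁ y₂ y₃)) = ENNReal.ofReal (f₂ y₂)) ∧
    (∀ y₃, (∫⁻ y₁, ∫⁻ y₂, ENNReal.ofReal (f y₁ y₂ y₃)) = ENNReal.ofReal (f₃ y₃)) := by
  have hF₁mem := vine_F_mem f₁ hf₁1 F₁ hF₁
  have hF₂mem := vine_F_mem f₂ hf₂1 F₂ hF₂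
  have hF₃mem := vine_F_mem f₃ hf₃1 F₃ hF₃
  have hF₁meas := vine_F_meas f₁ hf₁1 F₁ hF₁
  have hF₂meas := vine_F_meas f₂ hf₂1 F₂ hF₂
  have hF₃meas := vine_F_meas f₃ hf₃1 F₃ hF₃
  -- total mass of the conditional densities
  have hg12m : ∀ y₂, Measurable (fun t => c₁₂ (F₁ t) (F₂ y₂) * f₁ t) := fun y₂ =>
    (hc₁₂m.comp (hF₁meas.prodMk measurable_const)).mul hf₁m
  have hg12nn : ∀ y₂ t, 0 ≤ c₁₂ (F₁ t) (F₂ y₂) * f₁ t := fun y₂ t =>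
    mul_nonneg (hc₁₂0 _ _) (hf₁0 t)
  have hg12_1 : ∀ y₂, ∫⁻ t, ENNReal.ofReal (c₁₂ (F₁ t) (F₂ y₂) * f₁ t) = 1 := by
    intro y₂
    have h := vine_key' f₁ hf₁m hf₁0 hf₁1 F₁ hF₁ (fun u => c₁₂ u (F₂ y₂))
      (hc₁₂m.comp (measurable_id.prodMk measurable_const)) (fun u => hc₁₂0 u _)
    have h' : ∫⁻ t, ENNReal.ofReal (c₁₂ (F₁ t) (F₂ y₂) * f₁ t)
        = ∫⁻ u in Ioo (0:ℝ) 1, ENNReal.ofReal (c₁₂ u (F₂ y₂)) := h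
    exact h'.trans (hc₁₂u _ (hF₂mem y₂))
  have hg23m : ∀ y₂, Measurable (fun t => c₂₃ (F₂ y₂) (F₃ t) * f₃ t) := fun y₂ =>
    (hc₂₃m.comp (measurable_const.prodMk hF₃meas)).mul hf₃m
  have hg23nn : ∀ y₂ t, 0 ≤ c₂₃ (F₂ y₂) (F₃ t) * f₃ t := fun y₂ t =>
    mul_nonneg (hc₂₃0 _ _) (hf₃0 t)
  have hg23_1 : ∀ y₂, ∫⁻ t, ENNReal.ofReal (c₂₃ (F₂ y₂) (F₃ t) * f₃ t) = 1 := by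
    intro y₂
    have h := vine_key' f₃ hf₃m hf₃0 hf₃1 F₃ hF₃ (fun w => c₂₃ (F₂ y₂) w)
      (hc₂₃m.comp (measurable_const.prodMk measurable_id)) (fun w => hc₂₃0 _ _)
    have h' : ∫⁻ t, ENNReal.ofReal (c₂₃ (F₂ y₂) (F₃ t) * f₃ t)
        = ∫⁻ u in Ioo (0:ℝ) 1, ENNReal.ofReal (c₂₃ (F₂ y₂) u) := h
    exact h'.trans (hc₂₃v _ (hF₂mem y₂))
  have hF₁₂mem : ∀ y₁ y₂, F₁₂ y₁ y₂ ∈ Icc (0:ℝ) 1 := fun y₁ y₂ =>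
    vine_F_mem _ (hg12_1 y₂) (fun y => F₁₂ y y₂) (fun y => hF₁₂ y y₂) y₁
  have hF₃₂mem : ∀ y₃ y₂, F₃₂ y₃ y₂ ∈ Icc (0:ℝ) 1 := fun y₃ y₂ =>
    vine_F_mem _ (hg23_1 y₂) (fun y => F₃₂ y y₂) (fun y => hF₃₂ y y₂) y₃
  -- Step 1 : integrate out y₃
  have step1 : ∀ y₁ y₂, ∫⁻ y₃, ENNReal.ofReal (f y₁ y₂ y₃)
      = ENNReal.ofReal (c₁₂ (F₁ y₁) (F₂ y₂) * f₁ y₁ * f₂ y₂) := by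
    intro y₁ y₂
    have hre : ∀ y₃, ENNReal.ofReal (f y₁ y₂ y₃)
        = (ENNReal.ofReal (c₁₃₂ (F₁₂ y₁ y₂) (F₃₂ y₃ y₂))
            * ENNReal.ofReal (c₂₃ (F₂ y₂) (F₃ y₃) * f₃ y₃))
          * ENNReal.ofReal (c₁₂ (F₁ y₁) (F₂ y₂) * f₁ y₁ * f₂ y₂) := by
      intro y₃
      rw [← ENNReal.ofReal_mul (hc₁₃₂0 _ _),
        ← ENNReal.ofReal_mul (mul_nonneg (hc₁₃₂0 _ _) (mul_nonneg (hc₂₃0 _ _) (hf₃0 _))),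
        hf]
      congr 1
      ring
    have h := vine_key (fun t => c₂₃ (F₂ y₂) (F₃ t) * f₃ t) (hg23m y₂) (hg23nn y₂)
      (hg23_1 y₂) (fun y => F₃₂ y y₂) (fun y => hF₃₂ y y₂)
      (fun w => ENNReal.ofReal (c₁₃₂ (F₁₂ y₁ y₂) w))
      (ENNReal.measurable_ofReal.comp (hc₁₃₂m.comp (measurable_const.prodMk measurable_id)))
    have h' : ∫⁻ y₃, ENNReal.ofReal (c₁₃₂ (F₁₂ y₁ y₂) (F₃₂ y₃ y₂))
          * ENNReal.ofReal (c₂₃ (F₂ y₂) (F₃ y₃) * f₃ y₃)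
        = ∫⁻ u in Ioo (0:ℝ) 1, ENNReal.ofReal (c₁₃₂ (F₁₂ y₁ y₂) u) := h
    rw [lintegral_congr hre, lintegral_mul_const' _ _ ENNReal.ofReal_ne_top, h',
      hc₁₃₂v _ (hF₁₂mem y₁ y₂), one_mul]
  -- marginal in y₁
  have m1 : ∀ y₁, (∫⁻ y₂, ∫⁻ y₃, ENNReal.ofReal (f y₁ y₂ y₃)) = ENNReal.ofReal (f₁ y₁) := by
    intro y₁
    have hre : ∀ y₂, (∫⁻ y₃, ENNReal.ofReal (f y₁ y₂ y₃))
        = ENNReal.ofReal (c₁₂ (F₁ y₁) (F₂ y₂) * f₂ y₂) * ENNReal.ofReal (f₁ y₁) := by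
      intro y₂
      rw [step1 y₁ y₂, ← ENNReal.ofReal_mul (mul_nonneg (hc₁₂0 _ _) (hf₂0 _))]
      congr 1
      ring
    have h := vine_key' f₂ hf₂m hf₂0 hf₂1 F₂ hF₂ (fun v => c₁₂ (F₁ y₁) v)
      (hc₁₂m.comp (measurable_const.prodMk measurable_id)) (fun v => hc₁₂0 _ _)
    have h' : ∫⁻ y₂, ENNReal.ofReal (c₁₂ (F₁ y₁) (F₂ y₂) * f₂ y₂)
        = ∫⁻ u in Ioo (0:ℝ) 1, ENNReal.ofReal (c₁₂ (F₁ y₁) u) := h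
    rw [lintegral_congr hre, lintegral_mul_const' _ _ ENNReal.ofReal_ne_top, h',
      hc₁₂v _ (hF₁mem y₁), one_mul]
  -- marginal in y₂
  have m2 : ∀ y₂, (∫⁻ y₁, ∫⁻ y₃, ENNReal.ofReal (f y₁ y₂ y₃)) = ENNReal.ofReal (f₂ y₂) := by
    intro y₂
    have hre : ∀ y₁, (∫⁻ y₃, ENNReal.ofReal (f y₁ y₂ y₃))
        = ENNReal.ofReal (c₁₂ (F₁ y₁) (F₂ y₂) * f₁ y₁) * ENNReal.ofReal (f₂ y₂) := by
      intro y₁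
      rw [step1 y₁ y₂, ← ENNReal.ofReal_mul (mul_nonneg (hc₁₂0 _ _) (hf₁0 _))]
    rw [lintegral_congr hre, lintegral_mul_const' _ _ ENNReal.ofReal_ne_top, hg12_1 y₂,
      one_mul]
  refine ⟨?_, m1, m2, ?_⟩
  · rw [lintegral_congr m1, hf₁1]
  -- marginal in y₃
  intro y₃
  -- joint measurability of F₁₂
  have hF₁₂meas2 : Measurable (fun p : ℝ × ℝ => F₁₂ p.1 p.2) := by
    have he : (fun p : ℝ × ℝ => F₁₂ p.1 p.2) = fun p =>
        (∫⁻ t, (if t ≤ p.1 then ENNReal.ofReal (c₁₂ (F₁ t) (F₂ p.2) * f₁ t) else 0)).toReal := by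
      funext p
      rw [hF₁₂]
      congr 1
      rw [← lintegral_indicator measurableSet_Iic]
      exact lintegral_congr fun t => by rw [Set.indicator_apply]; simp [mem_Iic]
    rw [he]
    refine Measurable.ennreal_toReal ?_
    refine Measurable.lintegral_prod_right'
      (f := fun q : (ℝ × ℝ) × ℝ =>
        if q.2 ≤ q.1.1 then ENNReal.ofReal (c₁₂ (F₁ q.2) (F₂ q.1.2) * f₁ q.2) else 0) ?_
    refine Measurable.ite (measurableSet_le measurable_snd (measurable_fst.comp measurable_fst))
      ?_ measurable_const
    exact ENNReal.measurable_ofReal.comp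
      ((hc₁₂m.comp ((hF₁meas.comp measurable_snd).prodMk
        (hF₂meas.comp (measurable_snd.comp measurable_fst)))).mul (hf₁m.comp measurable_snd))
  -- measurability of y₂ ↦ F₃₂ y₃ y₂
  have hF₃₂meas : Measurable (fun y₂ => F₃₂ y₃ y₂) := by
    have he : (fun y₂ => F₃₂ y₃ y₂) = fun y₂ =>
        (∫⁻ t, (if t ≤ y₃ then ENNReal.ofReal (c₂₃ (F₂ y₂) (F₃ t) * f₃ t) else 0)).toReal := by
      funext y₂
      rw [hF₃₂]
      congr 1
      rw [← lintegral_indicator measurableSet_Iic]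
      exact lintegral_congr fun t => by rw [Set.indicator_apply]; simp [mem_Iic]
    rw [he]
    refine Measurable.ennreal_toReal ?_
    refine Measurable.lintegral_prod_right'
      (f := fun q : ℝ × ℝ =>
        if q.2 ≤ y₃ then ENNReal.ofReal (c₂₃ (F₂ q.1) (F₃ q.2) * f₃ q.2) else 0) ?_
    refine Measurable.ite (measurableSet_le measurable_snd measurable_const)
      ?_ measurable_const
    exact ENNReal.measurable_ofReal.comp
      ((hc₂₃m.comp ((hF₂meas.comp measurable_fst).prodMk
        (hF₃meas.comp measurable_snd))).mul (hf₃m.comp measurable_snd))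
  -- joint measurability of the integrand
  have hprod : Measurable (fun p : ℝ × ℝ => ENNReal.ofReal (f p.1 p.2 y₃)) := by
    have he : (fun p : ℝ × ℝ => f p.1 p.2 y₃) = fun p =>
        c₁₃₂ (F₁₂ p.1 p.2) (F₃₂ y₃ p.2) * c₂₃ (F₂ p.2) (F₃ y₃) * c₁₂ (F₁ p.1) (F₂ p.2)
          * f₁ p.1 * f₂ p.2 * f₃ y₃ := funext fun p => hf p.1 p.2 y₃
    refine ENNReal.measurable_ofReal.comp ?_
    rw [he]
    exact ((((((hc₁₃₂m.comp (hF₁₂meas2.prodMk (hF₃₂meas.comp measurable_snd))).mul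
      (hc₂₃m.comp ((hF₂meas.comp measurable_snd).prodMk measurable_const))).mul
      (hc₁₂m.comp ((hF₁meas.comp measurable_fst).prodMk (hF₂meas.comp measurable_snd)))).mul
      (hf₁m.comp measurable_fst)).mul (hf₂m.comp measurable_snd)).mul measurable_const)
  have hswap : (∫⁻ y₁, ∫⁻ y₂, ENNReal.ofReal (f y₁ y₂ y₃))
      = ∫⁻ y₂, ∫⁻ y₁, ENNReal.ofReal (f y₁ y₂ y₃) :=
    lintegral_lintegral_swap hprod.aemeasurable
  rw [hswap]
  -- integrate out y₁ for fixed y₂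
  have step3 : ∀ y₂, ∫⁻ y₁, ENNReal.ofReal (f y₁ y₂ y₃)
      = ENNReal.ofReal (c₂₃ (F₂ y₂) (F₃ y₃) * f₂ y₂ * f₃ y₃) := by
    intro y₂
    have hre : ∀ y₁, ENNReal.ofReal (f y₁ y₂ y₃)
        = (ENNReal.ofReal (c₁₃₂ (F₁₂ y₁ y₂) (F₃₂ y₃ y₂))
            * ENNReal.ofReal (c₁₂ (F₁ y₁) (F₂ y₂) * f₁ y₁))
          * ENNReal.ofReal (c₂₃ (F₂ y₂) (F₃ y₃) * f₂ y₂ * f₃ y₃) := by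
      intro y₁
      rw [← ENNReal.ofReal_mul (hc₁₃₂0 _ _),
        ← ENNReal.ofReal_mul (mul_nonneg (hc₁₃₂0 _ _) (mul_nonneg (hc₁₂0 _ _) (hf₁0 _))),
        hf]
      congr 1
      ring
    have h := vine_key (fun t => c₁₂ (F₁ t) (F₂ y₂) * f₁ t) (hg12m y₂) (hg12nn y₂)
      (hg12_1 y₂) (fun y => F₁₂ y y₂) (fun y => hF₁₂ y y₂)
      (fun w => ENNReal.ofReal (c₁₃₂ w (F₃₂ y₃ y₂)))
      (ENNReal.measurable_ofReal.comp (hc₁₃₂m.comp (measurable_id.prodMk measurable_const)))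
    have h' : ∫⁻ y₁, ENNReal.ofReal (c₁₃₂ (F₁₂ y₁ y₂) (F₃₂ y₃ y₂))
          * ENNReal.ofReal (c₁₂ (F₁ y₁) (F₂ y₂) * f₁ y₁)
        = ∫⁻ u in Ioo (0:ℝ) 1, ENNReal.ofReal (c₁₃₂ u (F₃₂ y₃ y₂)) := h
    rw [lintegral_congr hre, lintegral_mul_const' _ _ ENNReal.ofReal_ne_top, h',
      hc₁₃₂u _ (hF₃₂mem y₃ y₂), one_mul]
  -- integrate out y₂
  have hre : ∀ y₂, (∫⁻ y₁, ENNReal.ofReal (f y₁ y₂ y₃))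
      = ENNReal.ofReal (c₂₃ (F₂ y₂) (F₃ y₃) * f₂ y₂) * ENNReal.ofReal (f₃ y₃) := by
    intro y₂
    rw [step3 y₂, ← ENNReal.ofReal_mul (mul_nonneg (hc₂₃0 _ _) (hf₂0 _))]
  have h := vine_key' f₂ hf₂m hf₂0 hf₂1 F₂ hF₂ (fun v => c₂₃ v (F₃ y₃))
    (hc₂₃m.comp (measurable_id.prodMk measurable_const)) (fun v => hc₂₃0 _ _)
  have h' : ∫⁻ y₂, ENNReal.ofReal (c₂₃ (F₂ y₂) (F₃ y₃) * f₂ y₂)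
      = ∫⁻ u in Ioo (0:ℝ) 1, ENNReal.ofReal (c₂₃ u (F₃ y₃)) := h
  rw [lintegral_congr hre, lintegral_mul_const' _ _ ENNReal.ofReal_ne_top, h',
    hc₂₃u _ (hF₃mem y₃), one_mul]
end
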